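/- arXiv:2511.23295 — 3 statements merged into one kernel-verified Lean document; each statement's English description precedes it below -/
import Mathlib

section
/- Let σ > 0 and T ∈ ℝ, and let ξ : (words over {1,2}) → ℝ be finitely supported. Define ξ_t(v) := Σ_w ξ(v ++ w)·𝓔_{T−t}(w) (a finite sum). Then for every word v over {1,2}, the map t ↦ ξ_t(v) is differentiable on ℝ and satisfies d/dt ξ_t(v) = −( ξ_t(v ++ (1)) + (σ²/2)·ξ_t(v ++ (2,2)) ), together with the terminal condition ξ_T(v) = ξ(v). (Equivalently, the projected family ξ_t = ξ|_{𝓔_{T−t}} solves the tensor-valued linear ODE ξ̇_t = −ξ_t▷1 − (σ²/2)·ξ_t▷22 with ξ_T = ξ; this is Lemma 4.3 of the paper, stated coefficientwise.) -/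
noncomputable section

/-- Indicator (delta) function of a word. -/
def wordDelta (w : List ℕ) : List ℕ → ℝ := fun v => if v = w then 1 else 0

/-- Right projection `ℓ ▷ u`, defined by `(ℓ ▷ u)(v) = ℓ(v ++ u)`. -/
def rproj (f : List ℕ → ℝ) (u : List ℕ) : List ℕ → ℝ := fun v => f (v ++ u)

/-- Block decomposition of a word over `{1,2}` into blocks `(1)` and `(2,2)`:
returns `(n, m)` = (number of blocks, number of `(2,2)` blocks) if the word is
block-decomposable, `none` otherwise. -/
def blockCount : List ℕ → Option (ℕ × ℕ)
  | [] => some (0, 0)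
  | 1 :: w => (blockCount w).map fun p => (p.1 + 1, p.2)
  | 2 :: 2 :: w => (blockCount w).map fun p => (p.1 + 1, p.2 + 1)
  | _ => none

/-- Fawcett coefficient `𝓔_t(w) = a^m t^n / n!` (with `a = σ²/2`) for block-decomposable
words with `n` blocks of which `m` equal `(2,2)`, and `0` otherwise. -/
def fawcett (σ t : ℝ) (w : List ℕ) : ℝ :=
  match blockCount w with
  | some (n, m) => (σ ^ 2 / 2) ^ m * t ^ n / (n.factorial : ℝ)
  | none => 0

/-- `𝓔̃_t(w)`: equal to `𝓔_t(w)` if `w` contains no letter `3`, and `0` otherwise. -/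
def fawcettTil (σ t : ℝ) (w : List ℕ) : ℝ := if 3 ∈ w then 0 else fawcett σ t w

/-- Multiset of shuffles of two words, auxiliary (left/cons) recursion. -/
def shAux : List ℕ → List ℕ → Multiset (List ℕ)
  | [], w => {w}
  | v, [] => {v}
  | a :: v, b :: w =>
      ((shAux v (b :: w)).map fun u => a :: u) + ((shAux (a :: v) w).map fun u => b :: u)
termination_by v w => v.length + w.length

/-- Multiset of shuffles of two words; by construction it obeys the right-append recursion
`(v·i) ⧢ (w·j) = ((v ⧢ (w·j))·i) + (((v·i) ⧢ w)·j)`, `w ⧢ ∅ = ∅ ⧢ w = w`. -/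
def wordShuffles (v w : List ℕ) : Multiset (List ℕ) :=
  (shAux v.reverse w.reverse).map List.reverse

/-- Shuffle product of finitely supported functions on words: the bilinear extension of the
word shuffle (each word identified with its indicator function). -/
noncomputable def shuffle (f g : List ℕ → ℝ) : List ℕ → ℝ := fun u =>
  ∑' p : List ℕ × List ℕ, f p.1 * g p.2 * ((wordShuffles p.1 p.2).count u : ℝ)

def fawD (σ s : ℝ) (w : List ℕ) : ℝ :=
  match blockCount w with
  | some (n+1, m) => (σ ^ 2 / 2) ^ m * s ^ n / (n.factorial : ℝ)
  | _ => 0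

def d1 (σ s : ℝ) : List ℕ → ℝ
  | 1 :: u => fawcett σ s u
  | _ => 0

def d2 (σ s : ℝ) : List ℕ → ℝ
  | 2 :: 2 :: u => σ ^ 2 / 2 * fawcett σ s u
  | _ => 0

lemma blockCount_other (w : List ℕ) (h1 : w ≠ []) (h2 : ∀ u, w ≠ 1 :: u)
    (h3 : ∀ u, w ≠ 2 :: 2 :: u) : blockCount w = none := by
  match w with
  | [] => exact absurd rfl h1
  | 1 :: u => exact absurd rfl (h2 u)
  | 2 :: 2 :: u => exact absurd rfl (h3 u)
  | 0 :: u => rfl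
  | (n+3) :: u => rfl
  | [2] => rfl
  | 2 :: 0 :: u => rfl
  | 2 :: 1 :: u => rfl
  | 2 :: (n+3) :: u => rfl

lemma hasDerivAt_fawcett (σ y : ℝ) (w : List ℕ) :
    HasDerivAt (fun x => fawcett σ x w) (fawD σ y w) y := by
  unfold fawcett fawD
  rcases h : blockCount w with _ | ⟨n, m⟩
  · simp only [h]
    exact hasDerivAt_const y 0
  · simp only [h]
    cases n with
    | zero => simpa using hasDerivAt_const y ((σ ^ 2 / 2) ^ m)
    | succ n =>
      have h1 := ((hasDerivAt_pow (n + 1) y).const_mul ((σ ^ 2 / 2) ^ m)).div_const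
        ((n + 1).factorial : ℝ)
      refine h1.congr_deriv ?_
      have hfac : (((n + 1).factorial : ℝ)) = (n + 1) * (n.factorial : ℝ) := by
        rw [Nat.factorial_succ]; push_cast; ring
      have hne : (n.factorial : ℝ) ≠ 0 := Nat.cast_ne_zero.mpr n.factorial_ne_zero
      rw [hfac, Nat.add_sub_cancel]; push_cast
      field_simp

lemma fawD_cons1 (σ s : ℝ) (u : List ℕ) : fawD σ s (1 :: u) = fawcett σ s u := by
  unfold fawD fawcett
  have : blockCount (1 :: u) = (blockCount u).map fun p => (p.1 + 1, p.2) := rfl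
  rw [this]
  rcases h : blockCount u with _ | ⟨n, m⟩ <;> simp [h]

lemma fawD_cons22 (σ s : ℝ) (u : List ℕ) :
    fawD σ s (2 :: 2 :: u) = σ ^ 2 / 2 * fawcett σ s u := by
  unfold fawD fawcett
  have : blockCount (2 :: 2 :: u) = (blockCount u).map fun p => (p.1 + 1, p.2 + 1) := rfl
  rw [this]
  rcases h : blockCount u with _ | ⟨n, m⟩
  · simp [h]
  · simp [h]; ring

lemma fawD_split (σ s : ℝ) (w : List ℕ) : fawD σ s w = d1 σ s w + d2 σ s w := by
  match w with
  | [] => simp [fawD, blockCount, d1, d2]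
  | 1 :: u => rw [fawD_cons1]; simp [d1, d2]
  | 2 :: 2 :: u => rw [fawD_cons22]; simp [d1, d2]
  | 0 :: u => simp [fawD, blockCount_other (0 :: u) (by simp) (by simp) (by simp), d1, d2]
  | (n+3) :: u =>
      simp [fawD, blockCount_other ((n+3) :: u) (by simp) (by simp) (by simp), d1, d2]
  | [2] => simp [fawD, blockCount_other [2] (by simp) (by simp) (by simp), d1, d2]
  | 2 :: 0 :: u =>
      simp [fawD, blockCount_other (2 :: 0 :: u) (by simp) (by simp) (by simp), d1, d2]
  | 2 :: 1 :: u =>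
      simp [fawD, blockCount_other (2 :: 1 :: u) (by simp) (by simp) (by simp), d1, d2]
  | 2 :: (n+3) :: u =>
      simp [fawD, blockCount_other (2 :: (n+3) :: u) (by simp) (by simp) (by simp), d1, d2]

lemma d1_eq_zero (σ s : ℝ) (w : List ℕ) (h : ∀ u, w ≠ 1 :: u) : d1 σ s w = 0 := by
  unfold d1
  split
  · next u => exact absurd rfl (h u)
  · rfl

lemma d2_eq_zero (σ s : ℝ) (w : List ℕ) (h : ∀ u, w ≠ 2 :: 2 :: u) : d2 σ s w = 0 := by
  unfold d2
  split
  · next u => exact absurd rfl (h u)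
  · rfl

lemma fawcett_zero (σ : ℝ) (w : List ℕ) (h : w ≠ []) : fawcett σ 0 w = 0 := by
  match w with
  | 1 :: u =>
      unfold fawcett
      have h2 : blockCount (1 :: u) = (blockCount u).map fun p => (p.1 + 1, p.2) := rfl
      rw [h2]
      rcases h : blockCount u with _ | ⟨n, m⟩ <;> simp [h]
  | 2 :: 2 :: u =>
      unfold fawcett
      have h2 : blockCount (2 :: 2 :: u) = (blockCount u).map fun p => (p.1 + 1, p.2 + 1) := rfl
      rw [h2]
      rcases h : blockCount u with _ | ⟨n, m⟩ <;> simp [h]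
  | 0 :: u => simp [fawcett, blockCount_other (0 :: u) (by simp) (by simp) (by simp)]
  | (n+3) :: u => simp [fawcett, blockCount_other ((n+3) :: u) (by simp) (by simp) (by simp)]
  | [2] => simp [fawcett, blockCount_other [2] (by simp) (by simp) (by simp)]
  | 2 :: 0 :: u => simp [fawcett, blockCount_other (2 :: 0 :: u) (by simp) (by simp) (by simp)]
  | 2 :: 1 :: u => simp [fawcett, blockCount_other (2 :: 1 :: u) (by simp) (by simp) (by simp)]
  | 2 :: (n+3) :: u =>
      simp [fawcett, blockCount_other (2 :: (n+3) :: u) (by simp) (by simp) (by simp)]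

/-- Lemma 4.3, coefficientwise. For `σ > 0`, `T ∈ ℝ` and a finitely
supported `ξ` on words over `{1,2}`, the projected family
`ξ_t(v) = Σ_w ξ(v ++ w) · 𝓔_{T−t}(w)` is differentiable in `t` with
`d/dt ξ_t(v) = −(ξ_t(v ++ (1)) + (σ²/2) ξ_t(v ++ (2,2)))`, and `ξ_T = ξ`. -/
theorem stmt0 (σ T : ℝ) (hσ : 0 < σ)
    (ξ : List ℕ → ℝ) (hfin : (Function.support ξ).Finite)
    (halpha : ∀ w : List ℕ, ξ w ≠ 0 → ∀ l ∈ w, l = 1 ∨ l = 2)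
    (ξt : ℝ → List ℕ → ℝ)
    (hξt : ∀ t v, ξt t v = ∑' w : List ℕ, ξ (v ++ w) * fawcett σ (T - t) w) :
    ∀ v : List ℕ,
      (∀ t : ℝ, HasDerivAt (fun s => ξt s v)
        (-(ξt t (v ++ [1]) + σ ^ 2 / 2 * ξt t (v ++ [2, 2]))) t) ∧
      ξt T v = ξ v := by
  -- the index finset
  have hz : ∀ (v : List ℕ) (g : List ℕ → ℝ),
      ∀ w ∉ hfin.toFinset.image (fun u => u.drop v.length), ξ (v ++ w) * g w = 0 := by
    intro v g w hw
    rcases eq_or_ne (ξ (v ++ w)) 0 with h | h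
    · rw [h, zero_mul]
    · exact absurd (Finset.mem_image.mpr
        ⟨v ++ w, hfin.mem_toFinset.mpr h, by simp [List.drop_left]⟩) hw
  have hsum : ∀ (v : List ℕ) (g : List ℕ → ℝ),
      Summable (fun w => ξ (v ++ w) * g w) :=
    fun v g => summable_of_ne_finset_zero (hz v g)
  intro v
  constructor
  · intro t
    have hsplit : ∑' w, ξ (v ++ w) * fawD σ (T - t) w
        = ξt t (v ++ [1]) + σ ^ 2 / 2 * ξt t (v ++ [2, 2]) := by
      have e1 : ∀ w, ξ (v ++ w) * fawD σ (T - t) w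
          = ξ (v ++ w) * d1 σ (T - t) w + ξ (v ++ w) * d2 σ (T - t) w := by
        intro w; rw [fawD_split]; ring
      rw [tsum_congr e1, Summable.tsum_add (hsum v (d1 σ (T - t))) (hsum v (d2 σ (T - t)))]
      congr 1
      · rw [hξt]
        have hinj : Function.Injective (fun u : List ℕ => 1 :: u) :=
          fun a b h => by simpa using h
        have hsupp : Function.support (fun w => ξ (v ++ w) * d1 σ (T - t) w)
            ⊆ Set.range (fun u : List ℕ => 1 :: u) := by
          intro w hw
          by_contra hr
          have hne : ∀ u, w ≠ 1 :: u := fun u he => hr ⟨u, he.symm⟩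
          exact hw (by simp [d1_eq_zero σ (T - t) w hne])
        rw [← hinj.tsum_eq hsupp]
        apply tsum_congr
        intro u
        show ξ (v ++ 1 :: u) * d1 σ (T - t) (1 :: u) = ξ (v ++ [1] ++ u) * fawcett σ (T - t) u
        rw [show d1 σ (T - t) (1 :: u) = fawcett σ (T - t) u from rfl]
        simp [List.append_assoc]
      · rw [hξt]
        have hinj : Function.Injective (fun u : List ℕ => 2 :: 2 :: u) :=
          fun a b h => by simpa using h
        have hsupp : Function.support (fun w => ξ (v ++ w) * d2 σ (T - t) w)
            ⊆ Set.range (fun u : List ℕ => 2 :: 2 :: u) := by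
          intro w hw
          by_contra hr
          have hne : ∀ u, w ≠ 2 :: 2 :: u := fun u he => hr ⟨u, he.symm⟩
          exact hw (by simp [d2_eq_zero σ (T - t) w hne])
        rw [← hinj.tsum_eq hsupp, ← tsum_mul_left]
        apply tsum_congr
        intro u
        show ξ (v ++ 2 :: 2 :: u) * d2 σ (T - t) (2 :: 2 :: u)
          = σ ^ 2 / 2 * (ξ (v ++ [2, 2] ++ u) * fawcett σ (T - t) u)
        rw [show d2 σ (T - t) (2 :: 2 :: u) = σ ^ 2 / 2 * fawcett σ (T - t) u from rfl]
        have : v ++ [2, 2] ++ u = v ++ 2 :: 2 :: u := by simp [List.append_assoc]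
        rw [this]; ring
    have hderiv : ∀ w ∈ hfin.toFinset.image (fun u => u.drop v.length),
        HasDerivAt (fun s => ξ (v ++ w) * fawcett σ (T - s) w)
          (ξ (v ++ w) * -(fawD σ (T - t) w)) t := by
      intro w _
      have h0 : HasDerivAt (fun s : ℝ => T - s) (-1) t := (hasDerivAt_id t).const_sub T
      have h1 := (hasDerivAt_fawcett σ (T - t) w).comp t h0
      have h2 := h1.const_mul (ξ (v ++ w))
      refine h2.congr_deriv ?_
      ring
    have hS := HasDerivAt.fun_sum hderiv
    have hfun : (fun s => ξt s v)
        = fun s => ∑ w ∈ hfin.toFinset.image (fun u => u.drop v.length),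
            ξ (v ++ w) * fawcett σ (T - s) w :=
      funext fun s => (hξt s v).trans (tsum_eq_sum (hz v (fawcett σ (T - s))))
    rw [hfun]
    refine hS.congr_deriv ?_
    rw [← hsplit, ← tsum_eq_sum (L := SummationFilter.unconditional _) (hz v (fun w => -(fawD σ (T - t) w))), ← tsum_neg]
    exact tsum_congr fun w => by ring
  · rw [hξt]
    have h1 : ∀ w, w ≠ ([] : List ℕ) → ξ (v ++ w) * fawcett σ (T - T) w = 0 := by
      intro w hw
      rw [sub_self, fawcett_zero σ w hw, mul_zero]
    rw [tsum_eq_single [] h1]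
    simp [fawcett, blockCount]
end
end

section
/- Fix σ > 0 and set a := σ²/2. For every word w over {1,2} and every t ∈ ℝ, the map t ↦ 𝓔_t(w) is differentiable, 𝓔_0(w) equals 1 if w is the empty word and 0 otherwise, and d/dt 𝓔_t(w) = (𝓔_t(u) if w = (1) ++ u for some word u, and 0 otherwise) + a·(𝓔_t(u′) if w = (2,2) ++ u′ for some word u′, and 0 otherwise). (Equivalently, the Fawcett coefficient family satisfies d/dt 𝓔_t = (e₁ + (σ²/2)·e₂⊗e₂) ⊗ 𝓔_t with 𝓔_0 = 1, as used in the proof of Lemma 4.3.) -/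
noncomputable section

lemma deriv_aux (c t : ℝ) (n : ℕ) :
    HasDerivAt (fun s : ℝ => c * s ^ (n + 1) / ((n + 1).factorial : ℝ))
      (c * t ^ n / (n.factorial : ℝ)) t := by
  have h := ((hasDerivAt_pow (n + 1) t).const_mul c).div_const ((n + 1).factorial : ℝ)
  refine h.congr_deriv ?_
  have h1 : ((n + 1).factorial : ℝ) = (n + 1) * n.factorial := by
    rw [Nat.factorial_succ]; push_cast; ring
  have h2 : (n.factorial : ℝ) ≠ 0 := Nat.cast_ne_zero.mpr n.factorial_ne_zero
  rw [h1, Nat.add_sub_cancel]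
  push_cast
  field_simp

/-- The Fawcett coefficient family satisfies `𝓔_0 = δ_∅` and
`d/dt 𝓔_t(w) = [𝓔_t(u) if w = (1) ++ u] + (σ²/2)·[𝓔_t(u′) if w = (2,2) ++ u′]`,
i.e. `d/dt 𝓔_t = (e₁ + (σ²/2) e₂⊗e₂) ⊗ 𝓔_t`, `𝓔_0 = 1`. -/
theorem stmt1 (σ : ℝ) (hσ : 0 < σ) (w : List ℕ) (hw : ∀ l ∈ w, l = 1 ∨ l = 2) (t : ℝ) :
    HasDerivAt (fun s => fawcett σ s w)
      ((match w with
        | 1 :: u => fawcett σ t u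
        | _ => 0)
        + σ ^ 2 / 2 *
          (match w with
          | 2 :: 2 :: u => fawcett σ t u
          | _ => 0)) t
    ∧ fawcett σ 0 w = (if w = [] then 1 else 0) := by
  rcases w with _ | ⟨a, w⟩
  · refine ⟨?_, by simp [fawcett, blockCount]⟩
    simpa [fawcett, blockCount] using hasDerivAt_const t (1:ℝ)
  rcases hw a (by simp) with rfl | rfl
  · -- w = 1 :: u
    rcases h : blockCount w with _ | ⟨n, m⟩
    · refine ⟨?_, by simp [fawcett, blockCount, h]⟩
      simpa [fawcett, blockCount, h] using hasDerivAt_const t (0:ℝ)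
    · constructor
      · have hd := deriv_aux ((σ ^ 2 / 2) ^ m) t n
        have hf : (fun s => fawcett σ s (1 :: w))
            = fun s => (σ ^ 2 / 2) ^ m * s ^ (n + 1) / ((n + 1).factorial : ℝ) := by
          funext s; simp [fawcett, blockCount, h]
        rw [hf]
        have hv : fawcett σ t w = (σ ^ 2 / 2) ^ m * t ^ n / (n.factorial : ℝ) := by
          simp [fawcett, h]
        simpa [hv] using hd
      · simp [fawcett, blockCount, h]
  · -- w = 2 :: ?
    rcases w with _ | ⟨b, w⟩
    · refine ⟨?_, by simp [fawcett, blockCount]⟩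
      simpa [fawcett, blockCount] using hasDerivAt_const t (0:ℝ)
    rcases hw b (by simp) with rfl | rfl
    · refine ⟨?_, by simp [fawcett, blockCount]⟩
      simpa [fawcett, blockCount] using hasDerivAt_const t (0:ℝ)
    · rcases h : blockCount w with _ | ⟨n, m⟩
      · refine ⟨?_, by simp [fawcett, blockCount, h]⟩
        simpa [fawcett, blockCount, h] using hasDerivAt_const t (0:ℝ)
      · constructor
        · have hd := deriv_aux ((σ ^ 2 / 2) ^ (m + 1)) t n
          have hf : (fun s => fawcett σ s (2 :: 2 :: w))
              = fun s => (σ ^ 2 / 2) ^ (m + 1) * s ^ (n + 1) / ((n + 1).factorial : ℝ) := by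
            funext s; simp [fawcett, blockCount, h]
          rw [hf]
          have hv : fawcett σ t w = (σ ^ 2 / 2) ^ m * t ^ n / (n.factorial : ℝ) := by
            simp [fawcett, h]
          convert hd using 1
          simp [hv]
          ring
        · simp [fawcett, blockCount, h]
end
end

section
/- Let η, λ, σ, T > 0, c := √(2ηλσ²), 0 ≤ ν < c and Γ ∈ ℝ with |νΓ| < 1. Then the function f(t) := (1/(2(1−νΓ)))·( ν + c·tanh( (c(1−νΓ)/(2η))·(T−t) − (1/2)·ln((c+ν)/(c−ν)) ) ) satisfies the Riccati ordinary differential equation f′(t) = (ν − 2·f(t)·(1−νΓ))²/(4η) − (λ/2)σ² for every t ∈ ℝ, together with the terminal condition f(T) = 0. -/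
lemma hasDerivAt_tanh' (x : ℝ) :
    HasDerivAt Real.tanh (1 - Real.tanh x ^ 2) x := by
  have hc := Real.cosh_pos x
  have h := (Real.hasDerivAt_sinh x).div (Real.hasDerivAt_cosh x) (ne_of_gt hc)
  have heq : (Real.cosh x * Real.cosh x - Real.sinh x * Real.sinh x) / Real.cosh x ^ 2
      = 1 - Real.tanh x ^ 2 := by
    have h1 : Real.cosh x ^ 2 - Real.sinh x ^ 2 = 1 := Real.cosh_sq_sub_sinh_sq x
    rw [Real.tanh_eq_sinh_div_cosh]
    field_simp
  have : HasDerivAt (fun y => Real.sinh y / Real.cosh y) (1 - Real.tanh x ^ 2) x := heq ▸ h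
  exact this.congr_deriv rfl |>.congr_of_eventuallyEq
    (Filter.Eventually.of_forall fun y => (Real.tanh_eq_sinh_div_cosh y))

/-- scalar Riccati of Proposition 5.8. With `c := √(2ηλσ²)`,
`0 ≤ ν < c`, `|νΓ| < 1`, the function
`f(t) = (1/(2(1−νΓ)))·(ν + c·tanh((c(1−νΓ)/(2η))(T−t) − ½ ln((c+ν)/(c−ν))))`
solves `f′(t) = (ν − 2f(t)(1−νΓ))²/(4η) − (λ/2)σ²` on all of `ℝ`, with `f(T) = 0`. -/
theorem stmt9 (η lam σ T ν Γ c : ℝ)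
    (hη : 0 < η) (hlam : 0 < lam) (hσ : 0 < σ) (hT : 0 < T)
    (hc : c = Real.sqrt (2 * η * lam * σ ^ 2))
    (hν : 0 ≤ ν) (hνc : ν < c) (hΓ : |ν * Γ| < 1)
    (f : ℝ → ℝ)
    (hf : ∀ t, f t = 1 / (2 * (1 - ν * Γ)) *
      (ν + c * Real.tanh (c * (1 - ν * Γ) / (2 * η) * (T - t)
        - 1 / 2 * Real.log ((c + ν) / (c - ν))))) :
    (∀ t : ℝ, HasDerivAt f ((ν - 2 * f t * (1 - ν * Γ)) ^ 2 / (4 * η) - lam / 2 * σ ^ 2) t)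
      ∧ f T = 0 := by
  have hA : 0 < 1 - ν * Γ := by
    have := abs_lt.mp hΓ
    linarith [this.2]
  have hA' : (1 - ν * Γ) ≠ 0 := ne_of_gt hA
  have hc0 : 0 < c := lt_of_le_of_lt hν hνc
  have hcsq : c ^ 2 = 2 * η * lam * σ ^ 2 := by
    rw [hc, Real.sq_sqrt]
    positivity
  set a : ℝ := c * (1 - ν * Γ) / (2 * η) with ha
  set b : ℝ := 1 / 2 * Real.log ((c + ν) / (c - ν)) with hb
  set u : ℝ → ℝ := fun t => a * (T - t) - b with hu
  constructor
  · intro t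
    have hinner : HasDerivAt u (-a) t := by
      have h1 : HasDerivAt (fun s : ℝ => a * (T - s)) (a * -1) t := by
        simpa using (HasDerivAt.const_sub T (hasDerivAt_id t)).const_mul a
      have h2 := h1.sub_const b
      simp only [mul_neg, mul_one] at h2
      exact h2
    have htanh : HasDerivAt (fun s => Real.tanh (u s))
        ((1 - Real.tanh (u t) ^ 2) * (-a)) t :=
      (hasDerivAt_tanh' (u t)).comp t hinner
    have hfd : HasDerivAt f
        (1 / (2 * (1 - ν * Γ)) * (c * ((1 - Real.tanh (u t) ^ 2) * (-a)))) t := by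
      have : HasDerivAt (fun s => 1 / (2 * (1 - ν * Γ)) *
          (ν + c * Real.tanh (u s)))
          (1 / (2 * (1 - ν * Γ)) * (c * ((1 - Real.tanh (u t) ^ 2) * (-a)))) t :=
        ((htanh.const_mul c).const_add ν).const_mul _
      exact this.congr_of_eventuallyEq (Filter.Eventually.of_forall fun s => hf s)
    convert hfd using 1
    have hft : ν - 2 * f t * (1 - ν * Γ) = -(c * Real.tanh (u t)) := by
      rw [hf t]; field_simp; ring
    have key : lam / 2 * σ ^ 2 = c ^ 2 / (4 * η) := by
      field_simp
      linarith [hcsq]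
    rw [hft, ha, key]
    field_simp
    ring
  · -- terminal condition
    have hcν : c - ν ≠ 0 := by linarith
    have hr : 0 < (c + ν) / (c - ν) := by
      apply div_pos <;> linarith
    have huT : u T = -b := by simp [hu]
    set s : ℝ := Real.exp b with hs
    have hs0 : 0 < s := Real.exp_pos _
    have hs2 : s ^ 2 = (c + ν) / (c - ν) := by
      rw [hs, hb, sq, ← Real.exp_add,
        show 1 / 2 * Real.log ((c + ν) / (c - ν)) + 1 / 2 * Real.log ((c + ν) / (c - ν))
          = Real.log ((c + ν) / (c - ν)) by ring]
      exact Real.exp_log hr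
    have htanhb : Real.tanh b = ν / c := by
      rw [Real.tanh_eq_sinh_div_cosh, Real.sinh_eq, Real.cosh_eq, Real.exp_neg, ← hs]
      have hfrac : (s - s⁻¹) / 2 / ((s + s⁻¹) / 2) = (s ^ 2 - 1) / (s ^ 2 + 1) := by
        have hspos : (0:ℝ) < s ^ 2 + 1 := by positivity
        field_simp
      rw [hfrac, hs2]
      field_simp
      ring_nf
      field_simp [hc0.ne']
    have htanhT : Real.tanh (u T) = -(ν / c) := by
      rw [huT, Real.tanh_neg, htanhb]
    rw [hf T]
    have : u T = a * (T - T) - b := rfl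
    rw [show c * (1 - ν * Γ) / (2 * η) * (T - T) - 1 / 2 * Real.log ((c + ν) / (c - ν))
        = u T from rfl, htanhT]
    field_simp
    ring
end
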